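/- arXiv:1402.0606 — 2 statements merged into one kernel-verified Lean document; each statement's English description precedes it below -/
import Mathlib

section
/- If X₁, …, Xₙ are i.i.d. N(μ, σ²) random variables, then the sample mean μ̄ = (∑ₖ Xₖ)/n and the sum of squares SS̄ = ∑ₖ (Xₖ − μ̄)² are independent random variables. -/
/-!
The vector `(X₁, …, Xₙ)` is Gaussian, and so is its image `(μ̄, (Xₖ - μ̄)ₖ)` under a linear map.
For jointly Gaussian variables, uncorrelated means independent, and
`Cov(μ̄, Xₖ) = σ²/n = Var(μ̄)` makes `μ̄` uncorrelated with every residual `Xₖ - μ̄`.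
Hence `μ̄` is independent of the residual vector, and so of `SS̄`, which is a function of it.
-/

open MeasureTheory ProbabilityTheory Finset

namespace ProbabilityTheory

variable {Ω ι κ : Type*} {mΩ : MeasurableSpace Ω} {P : Measure Ω}

lemma iIndepFun.covariance_eq_ite [DecidableEq ι] {X : ι → Ω → ℝ} (hindep : iIndepFun X P)
    (hX : ∀ i, MemLp (X i) 2 P) (i j : ι) :
    cov[X i, X j; P] = if i = j then Var[X i; P] else 0 := by
  split_ifs with hij
  · rw [hij, covariance_self (hX j).aemeasurable]
  · exact (hindep.indepFun hij).covariance_eq_zero (hX i) (hX j)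

lemma covariance_mean_sub_mean_eq_zero [IsFiniteMeasure P] [Fintype ι] [DecidableEq ι]
    {X : ι → Ω → ℝ} (hX : ∀ i, MemLp (X i) 2 P) {v : ℝ}
    (hcov : ∀ i j, cov[X i, X j; P] = if i = j then v else 0) (k : ι) :
    cov[fun ω ↦ (∑ i, X i ω) / Fintype.card ι,
      fun ω ↦ X k ω - (∑ i, X i ω) / Fintype.card ι; P] = 0 := by
  set N : ℝ := (Fintype.card ι : ℝ)
  have hN : N ≠ 0 :=
    have : Nonempty ι := ⟨k⟩; Nat.cast_ne_zero.2 Fintype.card_ne_zero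
  have hmean : MemLp (fun ω ↦ (∑ i, X i ω) / N) 2 P := by
    simpa only [div_eq_mul_inv] using (memLp_finsetSum _ fun i _ ↦ hX i).mul_const _
  have hcov_mean (j : ι) : cov[fun ω ↦ (∑ i, X i ω) / N, X j; P] = v / N := by
    simp [covariance_fun_div_left, covariance_fun_sum_left hX (hX j), hcov]
  calc _ = v / N - (∑ i, cov[X i, fun ω ↦ (∑ i, X i ω) / N; P]) / N := by
        rw [covariance_fun_sub_right hmean (hX k) hmean, hcov_mean, covariance_comm,
          covariance_fun_div_left, covariance_fun_sum_left hX hmean]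
    _ = 0 := by
        simp_rw [covariance_comm (X _), hcov_mean, sum_const, card_univ, nsmul_eq_mul]
        rw [mul_div_cancel_left₀ _ hN, sub_self]

lemma HasGaussianLaw.mean_residual [Fintype ι] {X : ι → Ω → ℝ}
    (hX : HasGaussianLaw (fun ω i ↦ X i ω) P) :
    HasGaussianLaw (fun ω ↦ ((∑ i, X i ω) / Fintype.card ι,
      fun k ↦ X k ω - (∑ i, X i ω) / Fintype.card ι)) P := by
  let mean : (ι → ℝ) →L[ℝ] ℝ := (Fintype.card ι : ℝ)⁻¹ • ∑ i, ContinuousLinearMap.proj i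
  let L := mean.prod (ContinuousLinearMap.id ℝ (ι → ℝ) - ContinuousLinearMap.pi fun _ ↦ mean)
  have hL (ω : Ω) : L (fun i ↦ X i ω) = ((∑ i, X i ω) / Fintype.card ι,
      fun k ↦ X k ω - (∑ i, X i ω) / Fintype.card ι) := by
    ext <;> simp [L, mean, div_eq_inv_mul]
  simpa only [hL] using hX.map_fun L

lemma HasGaussianLaw.indepFun_pi_of_covariance_eq_zero [Fintype κ] {Y : Ω → ℝ} {Z : κ → Ω → ℝ}
    (hYZ : HasGaussianLaw (fun ω ↦ (Y ω, fun j ↦ Z j ω)) P) (h : ∀ j, cov[Y, Z j; P] = 0) :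
    IndepFun Y (fun ω j ↦ Z j ω) P := by
  have hUnit : HasGaussianLaw (fun ω ↦ (fun _ : Unit ↦ Y ω, fun j ↦ Z j ω)) P :=
    hYZ.map_fun ((ContinuousLinearMap.pi fun _ : Unit ↦ ContinuousLinearMap.id ℝ ℝ).prodMap
      (ContinuousLinearMap.id ℝ (κ → ℝ)))
  exact (hUnit.indepFun_of_covariance_eval fun _ ↦ h).comp (measurable_pi_apply ()) measurable_id

end ProbabilityTheory

theorem sample_mean_indep_sum_sq_general {Ω : Type*} [MeasurableSpace Ω] (P : Measure Ω)
    [IsProbabilityMeasure P] (n : ℕ) (μ : ℝ) (σ : NNReal)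
    (X : Fin n → Ω → ℝ)
    (hindep : iIndepFun X P)
    (hlaw : ∀ k, Measure.map (X k) P = gaussianReal μ (σ ^ 2)) :
    IndepFun (fun ω => (∑ k, X k ω) / n)
      (fun ω => ∑ k, (X k ω - (∑ j, X j ω) / n) ^ 2) P := by
  have hgauss (k : Fin n) : HasGaussianLaw (X k) P := ⟨by rw [hlaw k]; infer_instance⟩
  have hL2 (k : Fin n) : MemLp (X k) 2 P := (hgauss k).memLp_two
  have hvar (k : Fin n) : Var[X k; P] = σ ^ 2 := by
    rw [← variance_id_map (hgauss k).aemeasurable, hlaw k, variance_id_gaussianReal,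
      NNReal.coe_pow]
  have hcov (k : Fin n) :
      cov[fun ω ↦ (∑ j, X j ω) / n, fun ω ↦ X k ω - (∑ j, X j ω) / n; P] = 0 := by
    simpa using covariance_mean_sub_mean_eq_zero hL2
      (fun i j ↦ by rw [hindep.covariance_eq_ite hL2, hvar]) k
  have hpair := (hindep.hasGaussianLaw hgauss).mean_residual
  simp only [Fintype.card_fin] at hpair
  exact (hpair.indepFun_pi_of_covariance_eq_zero hcov).comp measurable_id
    (by fun_prop : Measurable fun r : Fin n → ℝ ↦ ∑ k, r k ^ 2)

/-- For i.i.d. `N(μ,σ²)` random variables `X₁,…,Xₙ`, the sample mean `μ̄` and the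
sum of squares `SS̄ = ∑ₖ(Xₖ − μ̄)²` are independent. -/
theorem sample_mean_indep_sum_sq {Ω : Type*} [MeasurableSpace Ω] (P : Measure Ω)
    [IsProbabilityMeasure P] (n : ℕ) (hn : 1 ≤ n) (μ : ℝ) (σ : NNReal) (hσ : 0 < σ)
    (X : Fin n → Ω → ℝ) (hX : ∀ k, Measurable (X k))
    (hindep : iIndepFun X P)
    (hlaw : ∀ k, Measure.map (X k) P = gaussianReal μ (σ ^ 2)) :
    IndepFun (fun ω => (∑ k, X k ω) / n)
      (fun ω => ∑ k, (X k ω - (∑ j, X j ω) / n) ^ 2) P :=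
  sample_mean_indep_sum_sq_general P n μ σ X hindep hlaw
end

section
/- If X₁, …, Xₙ are i.i.d. N(μ, σ²) with n ≥ 2, then SS̄/σ² = (∑ₖ(Xₖ − μ̄)²)/σ² has the chi-squared distribution with n − 1 degrees of freedom. -/
open MeasureTheory ProbabilityTheory

/-- Chi-squared density with `m` degrees of freedom. -/
noncomputable def chiSqPDF (m : ℕ) (x : ℝ) : ℝ :=
  if 0 < x then
    x ^ ((m : ℝ) / 2 - 1) * Real.exp (-x / 2) / (2 ^ ((m : ℝ) / 2) * Real.Gamma ((m : ℝ) / 2))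
  else 0

/-- The chi-squared distribution with `m` degrees of freedom, as a measure on ℝ. -/
noncomputable def chiSqMeasure (m : ℕ) : Measure ℝ :=
  volume.withDensity fun x => ENNReal.ofReal (chiSqPDF m x)

/-! Standardising, `Zₖ = (Xₖ - μ) / σ` are i.i.d. standard normal, so `Z` is the standard Gaussian
on `ℝⁿ` and `SS̄ / σ²` is the squared norm of the orthogonal projection of `Z` onto the hyperplane
`𝟙ᗮ`. An orthogonal projection maps the standard Gaussian to the standard Gaussian of its range
(compare characteristic functions), and the squared norm of a standard Gaussian in dimension `d`
is `χ²(d)`: its density `(2π)^(-d/2) exp (-‖x‖² / 2)` is radial, and polar coordinates followed by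
the substitution `t = r²` turn it into the chi-squared density. -/

open Real Set Module
open scoped ENNReal

-- Jacobian of the substitution `t = r ^ 2` in a radial integral over a `d`-dimensional space.
lemma abs_two_mul_rpow_smul_rpow_two_eq (f : ℝ → ℝ) {d : ℕ} (hd : d ≠ 0) {r : ℝ} (hr : 0 < r) :
    (|(2 : ℝ)| * r ^ ((2 : ℝ) - 1)) • ((r ^ (2 : ℝ)) ^ ((d : ℝ) / 2 - 1) * f (r ^ (2 : ℝ))) =
      2 * (r ^ (d - 1) • f (r ^ 2)) := by
  have : r ^ ((2 : ℝ) - 1) * (r ^ (2 : ℝ)) ^ ((d : ℝ) / 2 - 1) = r ^ (d - 1) := by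
    rw [← rpow_mul hr.le, ← rpow_add hr, ← rpow_natCast, Nat.cast_sub (by omega)]
    ring_nf
  rw [smul_eq_mul, abs_two, mul_assoc, ← mul_assoc (r ^ _), this, rpow_ofNat, smul_eq_mul]

section RadialIntegral

variable {E : Type*} [NormedAddCommGroup E] [InnerProductSpace ℝ E] [FiniteDimensional ℝ E]
  [MeasurableSpace E] [BorelSpace E] [Nontrivial E]

lemma integrable_comp_norm_sq_iff (f : ℝ → ℝ) :
    Integrable (fun x : E => f (‖x‖ ^ 2)) ↔
      IntegrableOn (fun t => t ^ ((finrank ℝ E : ℝ) / 2 - 1) * f t) (Ioi 0) := by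
  rw [integrable_fun_norm_addHaar volume (f := fun r => f (r ^ 2)),
    ← integrableOn_Ioi_comp_rpow_iff (fun t => t ^ ((finrank ℝ E : ℝ) / 2 - 1) * f t)
      two_ne_zero,
    integrableOn_congr_fun (fun r (hr : r ∈ Ioi 0) =>
      abs_two_mul_rpow_smul_rpow_two_eq f (finrank_pos (R := ℝ) (M := E)).ne' hr)
      measurableSet_Ioi]
  exact (integrable_const_mul_iff (c := (2 : ℝ)) (by norm_num) _).symm

lemma integral_comp_norm_sq (f : ℝ → ℝ) :
    ∫ x : E, f (‖x‖ ^ 2) = √π ^ finrank ℝ E / Gamma (finrank ℝ E / 2) *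
      ∫ t in Ioi 0, t ^ ((finrank ℝ E : ℝ) / 2 - 1) * f t := by
  have hd : (0 : ℝ) < finrank ℝ E := Nat.cast_pos.2 finrank_pos
  rw [integral_fun_norm_addHaar volume (fun r => f (r ^ 2)),
    ← integral_comp_rpow_Ioi (fun t => t ^ ((finrank ℝ E : ℝ) / 2 - 1) * f t) two_ne_zero,
    setIntegral_congr_fun measurableSet_Ioi (fun r (hr : r ∈ Ioi 0) =>
      abs_two_mul_rpow_smul_rpow_two_eq f (finrank_pos (R := ℝ) (M := E)).ne' hr),
    integral_const_mul, measureReal_def, InnerProductSpace.volume_ball, ENNReal.ofReal_one,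
    one_pow, one_mul, ENNReal.toReal_ofReal (by positivity), nsmul_eq_mul, smul_eq_mul,
    Gamma_add_one (half_pos hd).ne']
  have := (Gamma_pos_of_pos (half_pos hd)).ne'
  field_simp

lemma lintegral_ofReal_comp_norm_sq {f : ℝ → ℝ} (hf : Measurable f) (hf0 : 0 ≤ f) :
    ∫⁻ x : E, ENNReal.ofReal (f (‖x‖ ^ 2)) =
      ENNReal.ofReal (√π ^ finrank ℝ E / Gamma (finrank ℝ E / 2)) *
        ∫⁻ t in Ioi 0, ENNReal.ofReal (t ^ ((finrank ℝ E : ℝ) / 2 - 1) * f t) := by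
  have hC : 0 < √π ^ finrank ℝ E / Gamma (finrank ℝ E / 2) :=
    div_pos (pow_pos (sqrt_pos.2 pi_pos) _)
      (Gamma_pos_of_pos (half_pos (Nat.cast_pos.2 finrank_pos)))
  have hm : Measurable fun x : E => f (‖x‖ ^ 2) := hf.comp (by fun_prop)
  have hx0 : 0 ≤ᵐ[volume] fun x : E => f (‖x‖ ^ 2) := ae_of_all _ fun x => hf0 _
  have ht0 : 0 ≤ᵐ[volume.restrict (Ioi 0)] fun t : ℝ => t ^ ((finrank ℝ E : ℝ) / 2 - 1) * f t :=
    (ae_restrict_iff' measurableSet_Ioi).2 <| ae_of_all _ fun t (ht : 0 < t) =>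
      mul_nonneg (rpow_nonneg ht.le _) (hf0 t)
  by_cases hint : Integrable fun x : E => f (‖x‖ ^ 2)
  · rw [← ofReal_integral_eq_lintegral_ofReal hint hx0, integral_comp_norm_sq,
      ENNReal.ofReal_mul hC.le, ← ofReal_integral_eq_lintegral_ofReal
        ((integrable_comp_norm_sq_iff f).1 hint) ht0]
  · have hL : ∫⁻ x : E, ENNReal.ofReal (f (‖x‖ ^ 2)) = ∞ := by
      rwa [← not_ne_iff, lintegral_ofReal_ne_top_iff_integrable hm.aestronglyMeasurable hx0]
    rw [integrable_comp_norm_sq_iff, IntegrableOn,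
      ← lintegral_ofReal_ne_top_iff_integrable (by fun_prop) ht0, not_not] at hint
    rw [hL, hint, ENNReal.mul_top (ENNReal.ofReal_pos.2 hC).ne']

lemma map_norm_sq_withDensity {f : ℝ → ℝ} (hf : Measurable f) (hf0 : 0 ≤ f) :
    (volume.withDensity fun x : E => ENNReal.ofReal (f (‖x‖ ^ 2))).map (‖·‖ ^ 2) =
      (volume.restrict (Ioi 0)).withDensity fun t => ENNReal.ofReal
        (√π ^ finrank ℝ E / Gamma (finrank ℝ E / 2) * (t ^ ((finrank ℝ E : ℝ) / 2 - 1) * f t)) := by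
  ext s hs
  have hC : 0 ≤ √π ^ finrank ℝ E / Gamma (finrank ℝ E / 2) := by positivity
  have hpre : MeasurableSet ((‖·‖ ^ 2) ⁻¹' s : Set E) := (by fun_prop : Measurable _) hs
  rw [Measure.map_apply (by fun_prop) hs, withDensity_apply _ hpre, withDensity_apply _ hs,
    ← lintegral_indicator hpre, ← lintegral_indicator hs]
  convert lintegral_ofReal_comp_norm_sq (E := E) (hf.indicator hs)
    (indicator_nonneg fun t _ => hf0 t) using 1
  · refine lintegral_congr fun x => ?_
    by_cases hx : ‖x‖ ^ 2 ∈ s <;> simp [hx]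
  · rw [← lintegral_const_mul' _ _ ENNReal.ofReal_ne_top]
    refine lintegral_congr fun t => ?_
    by_cases ht : t ∈ s <;> simp [ht, ENNReal.ofReal_mul hC]

end RadialIntegral

lemma MeasureTheory.Measure.pi_withDensity_ofReal {ι : Type*} [Fintype ι] {α : ι → Type*}
    [∀ i, MeasurableSpace (α i)] (μ : ∀ i, Measure (α i)) [∀ i, SigmaFinite (μ i)]
    {f : ∀ i, α i → ℝ} (hf : ∀ i, Integrable (f i) (μ i)) (hf0 : ∀ i, 0 ≤ f i) :
    Measure.pi (fun i => (μ i).withDensity fun x => ENNReal.ofReal (f i x)) =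
      (Measure.pi μ).withDensity fun x => ENNReal.ofReal (∏ i, f i (x i)) := by
  have := fun i => isFiniteMeasure_withDensity_ofReal (hf i).2
  refine Measure.pi_eq fun s hs => ?_
  rw [withDensity_apply _ (.univ_pi hs), Measure.restrict_pi_pi,
    ← ofReal_integral_eq_lintegral_ofReal (.fintype_prod_dep fun i => (hf i).restrict)
      (ae_of_all _ fun x => Finset.prod_nonneg fun i _ => hf0 i (x i)),
    integral_fintype_prod_eq_prod (μ := fun i => (μ i).restrict (s i)),
    ENNReal.ofReal_prod_of_nonneg fun i _ => integral_nonneg (hf0 i)]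
  refine Finset.prod_congr rfl fun i _ => ?_
  rw [withDensity_apply _ (hs i),
    ofReal_integral_eq_lintegral_ofReal (hf i).restrict (ae_of_all _ (hf0 i))]

lemma MeasureTheory.MeasurePreserving.map_withDensity_comp {α β : Type*} [MeasurableSpace α]
    [MeasurableSpace β] {μ : Measure α} {ν : Measure β} {g : α → β}
    (hg : MeasurePreserving g μ ν) (hge : MeasurableEmbedding g) (f : β → ℝ≥0∞) :
    (μ.withDensity (f ∘ g)).map g = ν.withDensity f := by
  ext s hs
  rw [Measure.map_apply hg.measurable hs, withDensity_apply _ (hg.measurable hs),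
    withDensity_apply _ hs]
  exact hg.setLIntegral_comp_preimage_emb hge f s

lemma stdGaussian_euclideanSpace_eq_withDensity (ι : Type*) [Fintype ι] :
    stdGaussian (EuclideanSpace ℝ ι) = volume.withDensity fun x =>
      ENNReal.ofReal ((√(2 * π))⁻¹ ^ Fintype.card ι * exp (-‖x‖ ^ 2 / 2)) := by
  rw [← map_pi_eq_stdGaussian, gaussianReal_of_var_ne_zero 0 one_ne_zero, gaussianPDF_def,
    Measure.pi_withDensity_ofReal _ (fun _ => integrable_gaussianPDFReal 0 1)
      (fun _ => gaussianPDFReal_nonneg 0 1), ← volume_pi]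
  convert (PiLp.volume_preserving_toLp ι).map_withDensity_comp
    (MeasurableEquiv.toLp 2 (ι → ℝ)).measurableEmbedding _ using 2
  congr 1 with x
  simp [gaussianPDFReal, Finset.prod_mul_distrib, ← exp_sum, EuclideanSpace.real_norm_sq_eq,
    Finset.sum_div, neg_div]

lemma map_norm_sq_stdGaussian_euclideanSpace (ι : Type*) [Fintype ι] [Nonempty ι] :
    (stdGaussian (EuclideanSpace ℝ ι)).map (‖·‖ ^ 2) = chiSqMeasure (Fintype.card ι) := by
  have hexp : Measurable fun t : ℝ => (√(2 * π))⁻¹ ^ Fintype.card ι * exp (-t / 2) := by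
    fun_prop
  have h2π : √(2 * π) ^ Fintype.card ι =
      2 ^ ((Fintype.card ι : ℝ) / 2) * √π ^ Fintype.card ι := by
    rw [sqrt_mul zero_le_two, mul_pow, sqrt_eq_rpow, ← rpow_natCast, ← rpow_mul zero_le_two]
    ring_nf
  rw [stdGaussian_euclideanSpace_eq_withDensity,
    map_norm_sq_withDensity (f := fun t => (√(2 * π))⁻¹ ^ Fintype.card ι * exp (-t / 2)) hexp
      (fun t => by positivity), finrank_euclideanSpace, chiSqMeasure,
    ← withDensity_indicator measurableSet_Ioi]
  congr 1 with t
  by_cases ht : t ∈ Ioi 0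
  · rw [indicator_of_mem ht, chiSqPDF, if_pos (mem_Ioi.1 ht), inv_pow, h2π]
    have := (Gamma_pos_of_pos (half_pos (Nat.cast_pos.2 (Fintype.card_pos (α := ι))))).ne'
    field_simp
  · rw [indicator_of_notMem ht, chiSqPDF, if_neg (mt mem_Ioi.2 ht), ENNReal.ofReal_zero]

lemma ContinuousLinearMap.norm_comp_orthogonalProjectionOnto {𝕜 E : Type*} [RCLike 𝕜]
    [NormedAddCommGroup E] [InnerProductSpace 𝕜 E] (K : Submodule 𝕜 E) [K.HasOrthogonalProjection]
    (L : StrongDual 𝕜 K) : ‖L.comp K.orthogonalProjectionOnto‖ = ‖L‖ := by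
  refine le_antisymm ?_ (L.opNorm_le_bound (norm_nonneg _) fun v => ?_)
  · exact (L.opNorm_comp_le _).trans
      (mul_le_of_le_one_right (norm_nonneg _) K.orthogonalProjectionOnto_norm_le)
  calc ‖L v‖ = ‖L.comp K.orthogonalProjectionOnto v‖ := by
        simp [K.orthogonalProjectionOnto_mem_subspace_eq_self]
    _ ≤ ‖L.comp K.orthogonalProjectionOnto‖ * ‖v‖ := (L.comp _).le_opNorm _

section StdGaussian

variable {E : Type*} [NormedAddCommGroup E] [InnerProductSpace ℝ E] [FiniteDimensional ℝ E]
  [MeasurableSpace E] [BorelSpace E]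

lemma map_norm_sq_stdGaussian [Nontrivial E] :
    (stdGaussian E).map (‖·‖ ^ 2) = chiSqMeasure (finrank ℝ E) := by
  have : Nonempty (Fin (finrank ℝ E)) := ⟨⟨0, finrank_pos⟩⟩
  let e := (stdOrthonormalBasis ℝ E).repr
  have he : (‖·‖ ^ 2) ∘ e.symm = (‖·‖ ^ 2) := funext fun x => by simp
  rw [← stdGaussian_map e.symm, Measure.map_map (by fun_prop) e.symm.continuous.measurable, he,
    map_norm_sq_stdGaussian_euclideanSpace, Fintype.card_fin]

lemma stdGaussian_map_orthogonalProjectionOnto (K : Submodule ℝ E) :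
    (stdGaussian E).map K.orthogonalProjectionOnto = stdGaussian K := by
  have := Measure.isProbabilityMeasure_map (μ := stdGaussian E)
    K.orthogonalProjectionOnto.continuous.aemeasurable
  refine Measure.ext_of_charFunDual (funext fun L => ?_)
  rw [charFunDual_map, charFunDual_stdGaussian, charFunDual_stdGaussian,
    L.norm_comp_orthogonalProjectionOnto]

end StdGaussian

section SampleVariance

variable {ι : Type*} [Fintype ι]

lemma norm_orthogonalProjectionOnto_orthogonal_const_sq (z : ι → ℝ) :
    ‖(ℝ ∙ (WithLp.toLp 2 (fun _ => 1) : EuclideanSpace ℝ ι))ᗮ.orthogonalProjectionOnto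
        (WithLp.toLp 2 z)‖ ^ 2 = ∑ k, (z k - (∑ j, z j) / Fintype.card ι) ^ 2 := by
  rw [Submodule.coe_norm, ← Submodule.starProjection_apply,
    Submodule.starProjection_orthogonal_val, Submodule.starProjection_singleton,
    EuclideanSpace.real_norm_sq_eq]
  simp [PiLp.inner_apply, EuclideanSpace.real_norm_sq_eq]

lemma finrank_orthogonal_span_const [Nonempty ι] :
    finrank ℝ (ℝ ∙ (WithLp.toLp 2 (fun _ => 1) : EuclideanSpace ℝ ι))ᗮ = Fintype.card ι - 1 := by
  have := Submodule.finrank_add_finrank_orthogonal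
    (ℝ ∙ (WithLp.toLp 2 (fun _ => 1) : EuclideanSpace ℝ ι))
  rw [finrank_span_singleton (by simp [funext_iff]), finrank_euclideanSpace] at this
  omega

lemma sum_sq_sub_mean_sub_div [Nonempty ι] (x : ι → ℝ) (a b : ℝ) :
    ∑ k, ((x k - a) / b - (∑ j, (x j - a) / b) / Fintype.card ι) ^ 2 =
      (∑ k, (x k - (∑ j, x j) / Fintype.card ι) ^ 2) / b ^ 2 := by
  have hc : (Fintype.card ι : ℝ) ≠ 0 := Nat.cast_ne_zero.2 Fintype.card_ne_zero
  have hmean : (∑ j, (x j - a) / b) / Fintype.card ι = ((∑ j, x j) / Fintype.card ι - a) / b := by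
    rw [← Finset.sum_div, Finset.sum_sub_distrib, Finset.sum_const, Finset.card_univ, nsmul_eq_mul]
    field_simp
  simp_rw [hmean, ← sub_div, div_pow, Finset.sum_div, sub_sub_sub_cancel_right]

variable (ι) in
lemma map_sum_sq_sub_mean_pi_gaussianReal (hι : 2 ≤ Fintype.card ι) :
    (Measure.pi fun _ : ι => gaussianReal 0 1).map
      (fun z : ι → ℝ => ∑ k, (z k - (∑ j, z j) / Fintype.card ι) ^ 2) =
        chiSqMeasure (Fintype.card ι - 1) := by
  have : Nonempty ι := Fintype.card_pos_iff.1 (by omega)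
  set K := (ℝ ∙ (WithLp.toLp 2 (fun _ => 1) : EuclideanSpace ℝ ι))ᗮ
  have : Nontrivial K :=
    Module.nontrivial_of_finrank_pos (R := ℝ) (by rw [finrank_orthogonal_span_const]; omega)
  have hfac : (fun z : ι → ℝ => ∑ k, (z k - (∑ j, z j) / Fintype.card ι) ^ 2) =
      (‖·‖ ^ 2) ∘ K.orthogonalProjectionOnto ∘ WithLp.toLp 2 :=
    funext fun z => (norm_orthogonalProjectionOnto_orthogonal_const_sq z).symm
  rw [hfac, ← Measure.map_map (by fun_prop) (by fun_prop),
    ← Measure.map_map (by fun_prop) (by fun_prop), map_pi_eq_stdGaussian,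
    stdGaussian_map_orthogonalProjectionOnto, map_norm_sq_stdGaussian,
    finrank_orthogonal_span_const]

end SampleVariance

lemma gaussianReal_standardize {Ω : Type*} [MeasurableSpace Ω] {P : Measure Ω} {X : Ω → ℝ}
    {μ σ : ℝ} (hX : HasLaw X (gaussianReal μ (σ ^ 2).toNNReal) P) (hσ : σ ≠ 0) :
    HasLaw (fun ω => (X ω - μ) / σ) (gaussianReal 0 1) P := by
  convert gaussianReal_div_const (gaussianReal_sub_const hX μ) σ using 2
  · simp
  · ext
    simp [hσ, max_eq_left (sq_nonneg σ)]

theorem sum_sq_over_var_chiSq_general {Ω : Type*} [MeasurableSpace Ω] (P : Measure Ω)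
    (n : ℕ) (hn : 2 ≤ n) (μ : ℝ) (σ : ℝ) (hσ : 0 < σ)
    (X : Fin n → Ω → ℝ) (hX : ∀ k, Measurable (X k))
    (hindep : iIndepFun X P)
    (hlaw : ∀ k, Measure.map (X k) P = gaussianReal μ (Real.toNNReal (σ ^ 2))) :
    Measure.map (fun ω => (∑ k, (X k ω - (∑ j, X j ω) / n) ^ 2) / σ ^ 2) P
      = chiSqMeasure (n - 1) := by
  have : Nonempty (Fin n) := ⟨⟨0, by omega⟩⟩
  have hZ : HasLaw (fun ω k => (X k ω - μ) / σ) (Measure.pi fun _ => gaussianReal 0 1) P :=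
    (hindep.comp (fun _ x => (x - μ) / σ) fun _ => by fun_prop).hasLaw_pi fun k =>
      gaussianReal_standardize ⟨(hX k).aemeasurable, hlaw k⟩ hσ.ne'
  have hstat : (fun ω => (∑ k, (X k ω - (∑ j, X j ω) / n) ^ 2) / σ ^ 2) =
      (fun z : Fin n → ℝ => ∑ k, (z k - (∑ j, z j) / n) ^ 2) ∘ fun ω k => (X k ω - μ) / σ :=
    funext fun ω => by simpa using (sum_sq_sub_mean_sub_div (X · ω) μ σ).symm
  rw [hstat, ← Measure.map_map (by fun_prop) (by fun_prop), hZ.map_eq]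
  simpa using map_sum_sq_sub_mean_pi_gaussianReal (Fin n) (by simpa using hn)

/-- For i.i.d. `N(μ,σ²)` with `n ≥ 2`, `SS̄/σ² = (∑ₖ(Xₖ−μ̄)²)/σ²` is chi-squared
distributed with `n−1` degrees of freedom. -/
theorem sum_sq_over_var_chiSq {Ω : Type*} [MeasurableSpace Ω] (P : Measure Ω)
    [IsProbabilityMeasure P] (n : ℕ) (hn : 2 ≤ n) (μ : ℝ) (σ : ℝ) (hσ : 0 < σ)
    (X : Fin n → Ω → ℝ) (hX : ∀ k, Measurable (X k))
    (hindep : iIndepFun X P)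
    (hlaw : ∀ k, Measure.map (X k) P = gaussianReal μ (Real.toNNReal (σ ^ 2))) :
    Measure.map (fun ω => (∑ k, (X k ω - (∑ j, X j ω) / n) ^ 2) / σ ^ 2) P
      = chiSqMeasure (n - 1) :=
  sum_sq_over_var_chiSq_general P n hn μ σ hσ X hX hindep hlaw
end
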